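/- arXiv:1904.02500 — 2 statements merged into one kernel-verified Lean document; each statement's English description precedes it below -/
import Mathlib

section
/- The inverse Mills ratio r(t) = φ(t)/Φ(t) is strictly decreasing in t, where φ and Φ are the standard normal pdf and cdf; equivalently, t ↦ log Φ(t) is strictly concave on ℝ. -/
open MeasureTheory ProbabilityTheory Set Filter

noncomputable def millsPhi (t : ℝ) : ℝ := Real.exp (-t ^ 2 / 2) / Real.sqrt (2 * Real.pi)

lemma millsPhi_eq_pdf : millsPhi = gaussianPDFReal 0 1 := by
  funext t
  simp only [millsPhi, gaussianPDFReal, NNReal.coe_one, mul_one, sub_zero]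
  rw [inv_mul_eq_div, eq_div_iff (by positivity), div_mul_eq_mul_div, div_eq_iff (by positivity)]

lemma millsPhi_pos (t : ℝ) : 0 < millsPhi t := by
  rw [millsPhi_eq_pdf]; exact gaussianPDFReal_pos 0 1 t one_ne_zero

lemma continuous_millsPhi : Continuous millsPhi := by
  unfold millsPhi; fun_prop

lemma integrable_millsPhi : Integrable millsPhi := by
  rw [millsPhi_eq_pdf]; exact integrable_gaussianPDFReal 0 1

lemma hasDerivAt_millsPhi (t : ℝ) : HasDerivAt millsPhi (-t * millsPhi t) t := by
  have h : HasDerivAt (fun x : ℝ => Real.exp (-x ^ 2 / 2) / Real.sqrt (2 * Real.pi))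
      (Real.exp (-t ^ 2 / 2) * (-(2 * t ^ 1) / 2) / Real.sqrt (2 * Real.pi)) t :=
    (((hasDerivAt_pow 2 t).neg.div_const 2).exp).div_const _
  convert h using 1
  · rfl
  simp [millsPhi]; ring

lemma integrable_neg_mul_millsPhi : Integrable (fun s : ℝ => -s * millsPhi s) := by
  have h := (integrable_mul_exp_neg_mul_sq (by norm_num : (0:ℝ) < 1/2)).div_const
    (Real.sqrt (2 * Real.pi)) |>.neg
  refine h.congr (Filter.Eventually.of_forall fun x => ?_)
  simp only [Pi.neg_apply, millsPhi]
  ring_nf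

lemma tendsto_millsPhi_atBot : Tendsto millsPhi atBot (nhds 0) := by
  have h1 : Tendsto (fun t : ℝ => -t ^ 2 / 2) atBot atBot := by
    apply Tendsto.atBot_div_const (by norm_num : (0:ℝ) < 2)
    apply tendsto_neg_atTop_atBot.comp
    have : Tendsto (fun t : ℝ => (-t) ^ 2) atBot atTop :=
      (tendsto_pow_atTop two_ne_zero).comp tendsto_neg_atBot_atTop
    simpa using this
  have h2 := (Real.tendsto_exp_atBot.comp h1).div_const (Real.sqrt (2 * Real.pi))
  rw [zero_div] at h2
  exact h2

noncomputable def millsF (t : ℝ) : ℝ := ∫ x in Iic t, millsPhi x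

lemma millsF_eq (t : ℝ) : ((gaussianReal 0 1) (Set.Iic t)).toReal = millsF t := by
  rw [gaussianReal_apply_eq_integral 0 one_ne_zero, millsF, millsPhi_eq_pdf,
    ENNReal.toReal_ofReal (integral_nonneg fun x => gaussianPDFReal_nonneg 0 1 x)]

lemma millsF_pos (t : ℝ) : 0 < millsF t := by
  rw [millsF]
  rw [setIntegral_pos_iff_support_of_nonneg_ae
    (Filter.Eventually.of_forall fun x => (millsPhi_pos x).le) integrable_millsPhi.integrableOn]
  have : Function.support millsPhi = univ := by
    ext x; simp [Function.mem_support, (millsPhi_pos x).ne']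
  rw [this, univ_inter]
  simp [Real.volume_Iic]

lemma hasDerivAt_millsF (t : ℝ) : HasDerivAt millsF (millsPhi t) t := by
  have heq : millsF = fun t => millsF 0 + ∫ x in (0:ℝ)..t, millsPhi x := by
    funext u
    rw [← intervalIntegral.integral_Iic_sub_Iic integrable_millsPhi.integrableOn
      integrable_millsPhi.integrableOn]
    simp [millsF]
  rw [heq]
  refine HasDerivAt.const_add _ ?_
  exact intervalIntegral.integral_hasDerivAt_right
    integrable_millsPhi.intervalIntegrable
    (continuous_millsPhi.stronglyMeasurableAtFilter _ _)
    continuous_millsPhi.continuousAt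

lemma mills_key (t : ℝ) : 0 < t * millsF t + millsPhi t := by
  rcases le_or_gt 0 t with ht | ht
  · exact add_pos_of_nonneg_of_pos (mul_nonneg ht (millsF_pos t).le) (millsPhi_pos t)
  · have h1 : ∫ s in Iic t, -s * millsPhi s = millsPhi t := by
      have := integral_Iic_of_hasDerivAt_of_tendsto' (f := millsPhi) (a := t)
        (fun x _ => hasDerivAt_millsPhi x) integrable_neg_mul_millsPhi.integrableOn
        tendsto_millsPhi_atBot
      simpa using this
    have hint2 : Integrable (fun s : ℝ => (t - s) * millsPhi s) := by
      have : (fun s : ℝ => (t - s) * millsPhi s)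
          = fun s => t * millsPhi s + -s * millsPhi s := by funext s; ring
      rw [this]
      exact (integrable_millsPhi.const_mul t).add integrable_neg_mul_millsPhi
    have step1 : millsF (t - 1) ≤ ∫ s in Iic (t - 1), (t - s) * millsPhi s := by
      refine setIntegral_mono_on integrable_millsPhi.integrableOn hint2.integrableOn
        measurableSet_Iic fun s hs => ?_
      have hs' : s ≤ t - 1 := hs
      exact le_mul_of_one_le_left (millsPhi_pos s).le (by linarith)
    have step2 : ∫ s in Iic (t - 1), (t - s) * millsPhi s ≤ ∫ s in Iic t, (t - s) * millsPhi s := by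
      refine setIntegral_mono_set hint2.integrableOn ?_ ?_
      · filter_upwards [ae_restrict_mem measurableSet_Iic] with s hs
        exact mul_nonneg (by simp at hs; linarith) (millsPhi_pos s).le
      · exact HasSubset.Subset.eventuallyLE (Iic_subset_Iic.mpr (by linarith))
    have step3 : ∫ s in Iic t, (t - s) * millsPhi s = t * millsF t + millsPhi t := by
      have : (fun s : ℝ => (t - s) * millsPhi s)
          = fun s => t * millsPhi s + -s * millsPhi s := by funext s; ring
      rw [this, integral_add (integrable_millsPhi.const_mul t).integrableOn
        integrable_neg_mul_millsPhi.integrableOn, h1, integral_const_mul]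
      rfl
    have := (millsF_pos (t - 1)).trans_le (step1.trans (step2.trans_eq step3))
    linarith

lemma hasDerivAt_mills_ratio (t : ℝ) :
    HasDerivAt (fun t => millsPhi t / millsF t)
      ((-t * millsPhi t * millsF t - millsPhi t * millsPhi t) / millsF t ^ 2) t :=
  (hasDerivAt_millsPhi t).div (hasDerivAt_millsF t) (millsF_pos t).ne'

lemma mills_deriv_neg (t : ℝ) :
    deriv (fun t => millsPhi t / millsF t) t < 0 := by
  rw [(hasDerivAt_mills_ratio t).deriv]
  apply div_neg_of_neg_of_pos
  · nlinarith [mills_key t, millsPhi_pos t, millsF_pos t]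
  · exact pow_pos (millsF_pos t) 2

lemma mills_ratio_strictAnti : StrictAnti (fun t => millsPhi t / millsF t) :=
  strictAnti_of_deriv_neg mills_deriv_neg

/-- The inverse Mills ratio `r(t) = φ(t)/Φ(t)` is strictly decreasing,
where `φ` and `Φ` are the standard normal pdf and cdf; equivalently,
`t ↦ log Φ(t)` is strictly concave on `ℝ`. -/
theorem inverse_mills_ratio_strictAnti
    (Φ : ℝ → ℝ) (hΦ : ∀ t, Φ t = ((gaussianReal 0 1) (Set.Iic t)).toReal)
    (φ : ℝ → ℝ) (hφ : ∀ t, φ t = Real.exp (-t ^ 2 / 2) / Real.sqrt (2 * Real.pi)) :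
    StrictAnti (fun t => φ t / Φ t)
    ∧ StrictConcaveOn ℝ Set.univ (fun t => Real.log (Φ t)) := by
  have hΦ' : ∀ t, Φ t = millsF t := fun t => by rw [hΦ, millsF_eq]
  have hφ' : ∀ t, φ t = millsPhi t := fun t => by rw [hφ]; rfl
  have hr : (fun t => φ t / Φ t) = fun t => millsPhi t / millsF t := by
    funext t; rw [hΦ', hφ']
  constructor
  · rw [hr]; exact mills_ratio_strictAnti
  · have hL : (fun t => Real.log (Φ t)) = fun t => Real.log (millsF t) := by
      funext t; rw [hΦ']
    rw [hL]
    have hderiv : ∀ t, HasDerivAt (fun t => Real.log (millsF t)) (millsPhi t / millsF t) t :=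
      fun t => (hasDerivAt_millsF t).log (millsF_pos t).ne'
    apply StrictAnti.strictConcaveOn_univ_of_deriv
    · exact (Differentiable.continuous fun t => (hderiv t).differentiableAt)
    · have : deriv (fun t => Real.log (millsF t)) = fun t => millsPhi t / millsF t :=
        funext fun t => (hderiv t).deriv
      rw [this]; exact mills_ratio_strictAnti
end

section
/- In the two-stage model where, given Ψ(x)=m, x and y are conditionally independent and the score of f_m(y;θ) has zero mean, the post-selection Fisher information matrix decomposes as J^{(m)}_{x,y}(θ) = J^{(m)}_x(θ) + J_y(θ), where J^{(m)}_{x,y}(θ) = E_θ[∇_θ log f(x,y;θ) ∇_θ log f(x,y;θ)ᵀ | Ψ(x)=m] − g(θ)g(θ)ᵀ, g(θ) = ∇_θ log Pr(Ψ(x)=m;θ), J^{(m)}_x(θ) = E_θ[∇_θ log f_x(x;θ) ∇_θ log f_x(x;θ)ᵀ | Ψ(x)=m] − g(θ)g(θ)ᵀ, and J_y(θ) = E_θ[∇_θ log f_m(y;θ) ∇_θ log f_m(y;θ)ᵀ]. -/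
open MeasureTheory

/-- Decomposition of the post-selection Fisher information matrix in the
two-stage model.  Given the selection event `A = {Ψ(x)=m}` with probability `P > 0`, the
conditional joint density `f_x(x) f_m(y)/P` on `A × Ω_y`, first-stage score `sx`,
second-stage score `sy` (with zero mean), full score `sx + sy`, and
`g = ∇_θ log Pr(Ψ=m)`, stated entrywise:
`E[(sx+sy)_i (sx+sy)_j | A] − g_i g_j = (E[sx_i sx_j | A] − g_i g_j) + E[sy_i sy_j]`,
i.e. `J^{(m)}_{x,y} = J^{(m)}_x + J_y`. -/
theorem post_selection_FIM_decomposition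
    {X Y : Type*} [MeasurableSpace X] [MeasurableSpace Y]
    (μ : Measure X) (ν : Measure Y) {M : ℕ}
    (fx : X → ℝ) (fm : Y → ℝ) (A : Set X) (hA : MeasurableSet A)
    (sx : X → Fin M → ℝ) (sy : Y → Fin M → ℝ) (g : Fin M → ℝ)
    (P : ℝ) (hP : P = ∫ x in A, fx x ∂μ) (hPpos : 0 < P)
    (hfm1 : ∫ y, fm y ∂ν = 1)
    (hsyzero : ∀ j, ∫ y, sy y j * fm y ∂ν = 0)
    (hsxint : ∀ i, IntegrableOn (fun x => sx x i * fx x) A μ)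
    (hsyint : ∀ j, Integrable (fun y => sy y j * fm y) ν)
    (hsxsxint : ∀ i j, IntegrableOn (fun x => sx x i * sx x j * fx x) A μ)
    (hsysyint : ∀ i j, Integrable (fun y => sy y i * sy y j * fm y) ν) :
    ∀ i j,
      P⁻¹ * (∫ x in A, (∫ y, (sx x i + sy y i) * (sx x j + sy y j) * (fx x * fm y) ∂ν) ∂μ)
          - g i * g j
        = (P⁻¹ * (∫ x in A, sx x i * sx x j * fx x ∂μ) - g i * g j)
          + ∫ y, sy y i * sy y j * fm y ∂ν := by
  intro i j
  have hfmint : Integrable fm ν := by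
    by_contra h
    rw [integral_undef h] at hfm1
    norm_num at hfm1
  set c := ∫ y, sy y i * sy y j * fm y ∂ν with hc
  have hinner : ∀ x : X,
      (∫ y, (sx x i + sy y i) * (sx x j + sy y j) * (fx x * fm y) ∂ν)
        = sx x i * sx x j * fx x + fx x * c := by
    intro x
    have heq : (fun y => (sx x i + sy y i) * (sx x j + sy y j) * (fx x * fm y))
        = fun y => (sx x i * sx x j * fx x) * fm y
            + ((sx x i * fx x) * (sy y j * fm y)
              + ((sx x j * fx x) * (sy y i * fm y)
                + fx x * (sy y i * sy y j * fm y))) := by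
      funext y; ring
    have h1 : Integrable (fun y => (sx x i * sx x j * fx x) * fm y) ν :=
      hfmint.const_mul _
    have h2 : Integrable (fun y => (sx x i * fx x) * (sy y j * fm y)) ν :=
      (hsyint j).const_mul _
    have h3 : Integrable (fun y => (sx x j * fx x) * (sy y i * fm y)) ν :=
      (hsyint i).const_mul _
    have h4 : Integrable (fun y => fx x * (sy y i * sy y j * fm y)) ν :=
      (hsysyint i j).const_mul _
    have h34 : Integrable (fun y => (sx x j * fx x) * (sy y i * fm y)
        + fx x * (sy y i * sy y j * fm y)) ν := h3.add h4
    have h234 : Integrable (fun y => (sx x i * fx x) * (sy y j * fm y)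
        + ((sx x j * fx x) * (sy y i * fm y) + fx x * (sy y i * sy y j * fm y))) ν :=
      h2.add h34
    rw [heq, integral_add h1 h234, integral_add h2 h34, integral_add h3 h4,
      integral_const_mul, integral_const_mul, integral_const_mul, integral_const_mul,
      hfm1, hsyzero i, hsyzero j]
    ring
  have houter :
      (∫ x in A, (∫ y, (sx x i + sy y i) * (sx x j + sy y j) * (fx x * fm y) ∂ν) ∂μ)
        = (∫ x in A, sx x i * sx x j * fx x ∂μ) + c * P := by
    calc (∫ x in A, (∫ y, (sx x i + sy y i) * (sx x j + sy y j) * (fx x * fm y) ∂ν) ∂μ)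
        = ∫ x in A, (sx x i * sx x j * fx x + c * fx x) ∂μ := by
          refine integral_congr_ae (Filter.Eventually.of_forall fun x => ?_)
          simp only [hinner]; ring
      _ = (∫ x in A, sx x i * sx x j * fx x ∂μ) + ∫ x in A, c * fx x ∂μ := by
          have hfxint : IntegrableOn (fun x => fx x) A μ := by
            rcases eq_or_ne c 0 with hc0 | hc0
            · -- need fx integrable on A; from hP and hPpos: if not integrable, P = 0
              by_contra h
              rw [integral_undef h] at hP
              exact absurd hP (ne_of_gt hPpos)
            · by_contra h
              rw [integral_undef h] at hP
              exact absurd hP (ne_of_gt hPpos)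
          exact integral_add (hsxsxint i j) (hfxint.const_mul c)
      _ = (∫ x in A, sx x i * sx x j * fx x ∂μ) + c * P := by
          rw [integral_const_mul, hP]
  rw [houter]
  have hne : P ≠ 0 := ne_of_gt hPpos
  field_simp
  ring
end
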